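/- Consider real matrices A ∈ ℝ^{n×n}, B₂ ∈ ℝ^{n×m}, families B₁ⱼ ∈ ℝ^{n×pⱼ}, C₁ⱼ ∈ ℝ^{qⱼ×n}, D₁ⱼ ∈ ℝ^{qⱼ×m} for j = 1,…,k and B̌₂ᵢ ∈ ℝ^{n×rᵢ}, Č₂ᵢ ∈ ℝ^{sᵢ×n}, Ď₂ᵢ ∈ ℝ^{sᵢ×m} for i = 1,…,g, positive definite R ∈ ℝ^{n×n} and G ∈ ℝ^{m×m}, and multipliers τ₁,…,τ_k > 0. Define G_τ = G + Σⱼ τⱼ D₁ⱼᵀD₁ⱼ + Σᵢ Ď₂ᵢᵀĎ₂ᵢ, Q_τ = R + Σⱼ τⱼ C₁ⱼᵀC₁ⱼ + Σᵢ Č₂ᵢᵀČ₂ᵢ, L_τ = Σⱼ τⱼ C₁ⱼᵀD₁ⱼ + Σᵢ Č₂ᵢᵀĎ₂ᵢ, and W_τ = Σⱼ (1/τⱼ) B₁ⱼB₁ⱼᵀ + Σᵢ B̌₂ᵢB̌₂ᵢᵀ. Suppose the symmetric matrix X ∈ ℝ^{n×n} satisfies the algebraic Riccati equation (A − B₂G_τ⁻¹L_τᵀ)ᵀX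 + X(A − B₂G_τ⁻¹L_τᵀ) + X(W_τ − B₂G_τ⁻¹B₂ᵀ)X + Q_τ − L_τ G_τ⁻¹ L_τᵀ = 0, and let K = −G_τ⁻¹(B₂ᵀX + L_τᵀ). Then for all x ∈ ℝⁿ, ξⱼ ∈ ℝ^{pⱼ} (j = 1,…,k) and ηᵢ ∈ ℝ^{rᵢ} (i = 1,…,g), with u = Kx, the following dissipation inequality holds: 2 xᵀ X (A x + Σⱼ B₁ⱼ ξⱼ + Σᵢ B̌₂ᵢ ηᵢ + B₂ u) + xᵀ R x + uᵀ G u + Σⱼ τⱼ ( ‖C₁ⱼ x + D₁ⱼ u‖² − ‖ξⱼ‖² ) + Σᵢ ( ‖Č₂ᵢ x + Ď₂ᵢ u‖² − ‖ηᵢ‖² ) ≤ 0. -/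

import Mathlib

/-!
Completing the square in each disturbance bounds `2 xᵀX B₁ⱼ ξⱼ - τⱼ ‖ξⱼ‖²` by
`τⱼ⁻¹ ‖B₁ⱼᵀ X x‖²`, and likewise for the `ηᵢ`; together these give `xᵀ X Wτ X x`.
The cost terms are exactly the quadratic form of the augmented weights `Qτ, Lτ, Gτ` in `(x, u)`.
With `v = B₂ᵀ X x + Lτᵀ x`, the remaining `u`-dependent part `2 vᵀu + uᵀ Gτ u` equals
`-vᵀ Gτ⁻¹ v` at `u = Kx = -Gτ⁻¹ v`, and what is left is `xᵀ Ric x = 0`.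
-/

open Matrix

section Order
variable {𝕜 : Type*} [Field 𝕜] [LinearOrder 𝕜] [IsStrictOrderedRing 𝕜] {n : Type*} [Fintype n]

theorem two_mul_dotProduct_sub_le {τ : 𝕜} (hτ : 0 < τ) (a ξ : n → 𝕜) :
    2 * (a ⬝ᵥ ξ) - τ * (ξ ⬝ᵥ ξ) ≤ τ⁻¹ * (a ⬝ᵥ a) := by
  have hsq : 0 ≤ τ⁻¹ * ((a - τ • ξ) ⬝ᵥ (a - τ • ξ)) :=
    mul_nonneg (inv_nonneg.2 hτ.le) (Fintype.sum_nonneg fun _ => mul_self_nonneg _)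
  have hexpand : τ⁻¹ * ((a - τ • ξ) ⬝ᵥ (a - τ • ξ)) =
      τ⁻¹ * (a ⬝ᵥ a) - 2 * (a ⬝ᵥ ξ) + τ * (ξ ⬝ᵥ ξ) := by
    simp only [sub_dotProduct, dotProduct_sub, smul_dotProduct, dotProduct_smul, smul_eq_mul,
      dotProduct_comm ξ a]
    field_simp
    ring
  linarith

theorem sum_two_mul_dotProduct_mulVec_sub_le {ι : Type*} [Fintype ι] {p : ι → Type*}
    [∀ j, Fintype (p j)] (B : ∀ j, Matrix n (p j) 𝕜) {τ : ι → 𝕜} (hτ : ∀ j, 0 < τ j)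
    (y : n → 𝕜) (ξ : ∀ j, p j → 𝕜) :
    2 * (y ⬝ᵥ ∑ j, B j *ᵥ ξ j) - ∑ j, τ j * (ξ j ⬝ᵥ ξ j) ≤
      y ⬝ᵥ ((∑ j, (τ j)⁻¹ • (B j * (B j)ᵀ)) *ᵥ y) := by
  have hW : y ⬝ᵥ ((∑ j, (τ j)⁻¹ • (B j * (B j)ᵀ)) *ᵥ y) =
      ∑ j, (τ j)⁻¹ * ((B j)ᵀ *ᵥ y ⬝ᵥ (B j)ᵀ *ᵥ y) := by
    simp only [sum_mulVec, dotProduct_sum, smul_mulVec, dotProduct_smul, smul_eq_mul,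
      ← mulVec_mulVec, dotProduct_transpose_mulVec]
  rw [hW, dotProduct_sum, Finset.mul_sum, ← Finset.sum_sub_distrib]
  refine Finset.sum_le_sum fun j _ => ?_
  rw [dotProduct_mulVec, ← mulVec_transpose]
  exact two_mul_dotProduct_sub_le (hτ j) _ _

end Order

section Ring
variable {R : Type*} [CommRing R] {l m n : Type*} [Fintype l] [Fintype m] [Fintype n]

theorem dotProduct_add_mulVec_self (C : Matrix l n R) (D : Matrix l m R) (x : n → R)
    (u : m → R) :
    (C *ᵥ x + D *ᵥ u) ⬝ᵥ (C *ᵥ x + D *ᵥ u) =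
      x ⬝ᵥ ((Cᵀ * C) *ᵥ x) + 2 * (x ⬝ᵥ ((Cᵀ * D) *ᵥ u)) + u ⬝ᵥ ((Dᵀ * D) *ᵥ u) := by
  simp only [← mulVec_mulVec, dotProduct_transpose_mulVec, add_dotProduct, dotProduct_add,
    dotProduct_comm (D *ᵥ u) (C *ᵥ x)]
  ring

theorem sum_mul_dotProduct_add_mulVec_self {ι : Type*} [Fintype ι] {q : ι → Type*}
    [∀ j, Fintype (q j)] (c : ι → R) (C : ∀ j, Matrix (q j) n R) (D : ∀ j, Matrix (q j) m R)
    (x : n → R) (u : m → R) :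
    ∑ j, c j * ((C j *ᵥ x + D j *ᵥ u) ⬝ᵥ (C j *ᵥ x + D j *ᵥ u)) =
      x ⬝ᵥ ((∑ j, c j • ((C j)ᵀ * C j)) *ᵥ x) +
        2 * (x ⬝ᵥ ((∑ j, c j • ((C j)ᵀ * D j)) *ᵥ u)) +
        u ⬝ᵥ ((∑ j, c j • ((D j)ᵀ * D j)) *ᵥ u) := by
  simp only [dotProduct_add_mulVec_self, sum_mulVec, dotProduct_sum, smul_mulVec,
    dotProduct_smul, smul_eq_mul, Finset.mul_sum, ← Finset.sum_add_distrib]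
  exact Finset.sum_congr rfl fun j _ => by ring

theorem Matrix.IsSymm.dotProduct_mulVec_comm {X : Matrix n n R} (hX : X.IsSymm) (x z : n → R) :
    x ⬝ᵥ (X *ᵥ z) = (X *ᵥ x) ⬝ᵥ z := by
  rw [dotProduct_mulVec, ← mulVec_transpose, hX.eq]

theorem sum_sq_eq_dotProduct_self (v : n → R) : ∑ i, v i ^ 2 = v ⬝ᵥ v := by
  simp only [dotProduct, sq]

theorem stage_cost_eq {ι κ : Type*} [Fintype ι] [Fintype κ] {q : ι → Type*} [∀ j, Fintype (q j)]
    {s : κ → Type*} [∀ i, Fintype (s i)] (R₀ : Matrix n n R) (G : Matrix m m R) (τ : ι → R)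
    (C₁ : ∀ j, Matrix (q j) n R) (D₁ : ∀ j, Matrix (q j) m R)
    (C₂ : ∀ i, Matrix (s i) n R) (D₂ : ∀ i, Matrix (s i) m R) (x : n → R) (u : m → R) :
    x ⬝ᵥ (R₀ *ᵥ x) + u ⬝ᵥ (G *ᵥ u) +
        ∑ j, τ j * ((C₁ j *ᵥ x + D₁ j *ᵥ u) ⬝ᵥ (C₁ j *ᵥ x + D₁ j *ᵥ u)) +
        ∑ i, (C₂ i *ᵥ x + D₂ i *ᵥ u) ⬝ᵥ (C₂ i *ᵥ x + D₂ i *ᵥ u) =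
      x ⬝ᵥ ((R₀ + (∑ j, τ j • ((C₁ j)ᵀ * C₁ j)) + ∑ i, (C₂ i)ᵀ * C₂ i) *ᵥ x) +
        2 * (x ⬝ᵥ (((∑ j, τ j • ((C₁ j)ᵀ * D₁ j)) + ∑ i, (C₂ i)ᵀ * D₂ i) *ᵥ u)) +
        u ⬝ᵥ ((G + (∑ j, τ j • ((D₁ j)ᵀ * D₁ j)) + ∑ i, (D₂ i)ᵀ * D₂ i) *ᵥ u) := by
  have h₂ := sum_mul_dotProduct_add_mulVec_self 1 C₂ D₂ x u
  simp only [Pi.one_apply, one_mul, one_smul] at h₂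
  rw [sum_mul_dotProduct_add_mulVec_self, h₂]
  simp only [add_mulVec, dotProduct_add]
  ring

variable [DecidableEq m]

/-- For singular `M` both sides vanish, since then `M⁻¹ = 0`. -/
theorem two_mul_dotProduct_neg_inv_mulVec (M : Matrix m m R) (v : m → R) :
    2 * (v ⬝ᵥ -(M⁻¹ *ᵥ v)) + -(M⁻¹ *ᵥ v) ⬝ᵥ (M *ᵥ -(M⁻¹ *ᵥ v)) = -(v ⬝ᵥ (M⁻¹ *ᵥ v)) := by
  by_cases h : IsUnit M.det
  · simp only [mulVec_neg, mulVec_mulVec, mul_nonsing_inv _ h, one_mulVec, dotProduct_neg,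
      neg_dotProduct, neg_neg, dotProduct_comm (M⁻¹ *ᵥ v) v]
    ring
  · simp [nonsing_inv_apply_not_isUnit _ h]

theorem riccati_dotProduct_eq {A Q W X : Matrix n n R} {B L : Matrix n m R} {G : Matrix m m R}
    (hX : X.IsSymm) (hG : Gᵀ = G)
    (hRic : (A - B * G⁻¹ * Lᵀ)ᵀ * X + X * (A - B * G⁻¹ * Lᵀ) + X * (W - B * G⁻¹ * Bᵀ) * X +
      Q - L * G⁻¹ * Lᵀ = 0) (x : n → R) :
    2 * ((X *ᵥ x) ⬝ᵥ (A *ᵥ x)) + (X *ᵥ x) ⬝ᵥ (W *ᵥ (X *ᵥ x)) + x ⬝ᵥ (Q *ᵥ x) =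
      (Bᵀ *ᵥ (X *ᵥ x) + Lᵀ *ᵥ x) ⬝ᵥ (G⁻¹ *ᵥ (Bᵀ *ᵥ (X *ᵥ x) + Lᵀ *ᵥ x)) := by
  have hsq : Aᵀ * X + X * A + X * W * X + Q - (X * B + L) * G⁻¹ * (X * B + L)ᵀ = 0 := by
    rw [← hRic]
    simp only [transpose_sub, transpose_add, transpose_mul, transpose_transpose,
      transpose_nonsing_inv, hG, hX.eq, Matrix.mul_sub, Matrix.sub_mul, Matrix.mul_add,
      Matrix.add_mul, Matrix.mul_assoc]
    abel
  have := congrArg (fun M => x ⬝ᵥ (M *ᵥ x)) hsq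
  simp only [add_mulVec, sub_mulVec, ← mulVec_mulVec, dotProduct_add, dotProduct_sub, zero_mulVec,
    dotProduct_zero, dotProduct_transpose_mulVec, transpose_add, transpose_mul, hX.eq, hX.dotProduct_mulVec_comm]
    at this
  rw [add_dotProduct, dotProduct_comm (Bᵀ *ᵥ _), dotProduct_transpose_mulVec,
    dotProduct_comm (Lᵀ *ᵥ _), dotProduct_transpose_mulVec]
  linear_combination this

end Ring

theorem stmt8_general (n m k g : ℕ) (p q : Fin k → ℕ) (r s : Fin g → ℕ)
    (A : Matrix (Fin n) (Fin n) ℝ) (B₂ : Matrix (Fin n) (Fin m) ℝ)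
    (B₁ : ∀ j : Fin k, Matrix (Fin n) (Fin (p j)) ℝ)
    (C₁ : ∀ j : Fin k, Matrix (Fin (q j)) (Fin n) ℝ)
    (D₁ : ∀ j : Fin k, Matrix (Fin (q j)) (Fin m) ℝ)
    (B₂' : ∀ i : Fin g, Matrix (Fin n) (Fin (r i)) ℝ)
    (C₂ : ∀ i : Fin g, Matrix (Fin (s i)) (Fin n) ℝ)
    (D₂ : ∀ i : Fin g, Matrix (Fin (s i)) (Fin m) ℝ)
    (R : Matrix (Fin n) (Fin n) ℝ)
    (G : Matrix (Fin m) (Fin m) ℝ) (hG : G.PosDef)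
    (τ : Fin k → ℝ) (hτ : ∀ j, 0 < τ j)
    (Gτ : Matrix (Fin m) (Fin m) ℝ)
    (hGτ : Gτ = G + (∑ j, τ j • ((D₁ j)ᵀ * D₁ j)) + ∑ i, (D₂ i)ᵀ * D₂ i)
    (Qτ : Matrix (Fin n) (Fin n) ℝ)
    (hQτ : Qτ = R + (∑ j, τ j • ((C₁ j)ᵀ * C₁ j)) + ∑ i, (C₂ i)ᵀ * C₂ i)
    (Lτ : Matrix (Fin n) (Fin m) ℝ)
    (hLτ : Lτ = (∑ j, τ j • ((C₁ j)ᵀ * D₁ j)) + ∑ i, (C₂ i)ᵀ * D₂ i)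
    (Wτ : Matrix (Fin n) (Fin n) ℝ)
    (hWτ : Wτ = (∑ j, (τ j)⁻¹ • (B₁ j * (B₁ j)ᵀ)) + ∑ i, B₂' i * (B₂' i)ᵀ)
    (X : Matrix (Fin n) (Fin n) ℝ) (hXsymm : X.IsSymm)
    (hRic : (A - B₂ * Gτ⁻¹ * Lτᵀ)ᵀ * X + X * (A - B₂ * Gτ⁻¹ * Lτᵀ) +
      X * (Wτ - B₂ * Gτ⁻¹ * B₂ᵀ) * X + Qτ - Lτ * Gτ⁻¹ * Lτᵀ = 0)
    (K : Matrix (Fin m) (Fin n) ℝ) (hK : K = -(Gτ⁻¹ * (B₂ᵀ * X + Lτᵀ))) :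
    ∀ (x : Fin n → ℝ) (ξ : ∀ j : Fin k, Fin (p j) → ℝ) (η : ∀ i : Fin g, Fin (r i) → ℝ),
      2 * (x ⬝ᵥ (X *ᵥ (A *ᵥ x + (∑ j, B₁ j *ᵥ ξ j) + (∑ i, B₂' i *ᵥ η i) +
            B₂ *ᵥ (K *ᵥ x)))) +
        x ⬝ᵥ (R *ᵥ x) + (K *ᵥ x) ⬝ᵥ (G *ᵥ (K *ᵥ x)) +
        (∑ j, τ j * ((∑ a, ((C₁ j *ᵥ x + D₁ j *ᵥ (K *ᵥ x)) a) ^ 2) - ∑ a, ξ j a ^ 2)) +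
        (∑ i, ((∑ a, ((C₂ i *ᵥ x + D₂ i *ᵥ (K *ᵥ x)) a) ^ 2) - ∑ a, η i a ^ 2)) ≤ 0 := by
  intro x ξ η
  have hGτ_symm : Gτᵀ = Gτ := by
    have hG_symm : Gᵀ = G := hG.isHermitian
    simp only [hGτ, transpose_add, transpose_sum, transpose_smul, transpose_mul,
      transpose_transpose, hG_symm]
  have hric := riccati_dotProduct_eq hXsymm hGτ_symm hRic x
  rw [hWτ, add_mulVec, dotProduct_add] at hric
  have hcost := stage_cost_eq R G τ C₁ D₁ C₂ D₂ x (K *ᵥ x)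
  rw [← hQτ, ← hLτ, ← hGτ] at hcost
  set y := X *ᵥ x
  set u := K *ᵥ x
  set v := B₂ᵀ *ᵥ y + Lτᵀ *ᵥ x
  have hopt := two_mul_dotProduct_neg_inv_mulVec Gτ v
  have hu : -(Gτ⁻¹ *ᵥ v) = u := by
    simp only [u, v, y, hK, neg_mulVec, ← mulVec_mulVec, add_mulVec]
  rw [hu, add_dotProduct, dotProduct_comm (B₂ᵀ *ᵥ _), dotProduct_transpose_mulVec,
    dotProduct_comm (Lτᵀ *ᵥ _), dotProduct_transpose_mulVec] at hopt
  have hξ := sum_two_mul_dotProduct_mulVec_sub_le B₁ hτ y ξ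
  have hη := sum_two_mul_dotProduct_mulVec_sub_le B₂' (fun _ => one_pos) y η
  simp only [inv_one, one_smul, one_mul] at hη
  simp only [sum_sq_eq_dotProduct_self, mul_sub, Finset.sum_sub_distrib]
  rw [hXsymm.dotProduct_mulVec_comm, dotProduct_add, dotProduct_add, dotProduct_add]
  linarith

/-- Pointwise completion-of-squares (dissipation) inequality for the minimax
LQR controller: if the symmetric matrix `X` solves the algebraic Riccati equation for the data
`(A, B₂, B₁ⱼ, C₁ⱼ, D₁ⱼ, B̌₂ᵢ, Č₂ᵢ, Ď₂ᵢ, R, G, τ)` and `K = -Gτ⁻¹(B₂ᵀX + Lτᵀ)`, then for all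
`x`, `ξⱼ`, `ηᵢ` and `u = Kx`,
`2xᵀX ẋ + xᵀRx + uᵀGu + Σⱼ τⱼ(‖C₁ⱼx + D₁ⱼu‖² - ‖ξⱼ‖²) + Σᵢ(‖Č₂ᵢx + Ď₂ᵢu‖² - ‖ηᵢ‖²) ≤ 0`
(Euclidean norms written as sums of squares). -/
theorem stmt8 (n m k g : ℕ) (p q : Fin k → ℕ) (r s : Fin g → ℕ)
    (A : Matrix (Fin n) (Fin n) ℝ) (B₂ : Matrix (Fin n) (Fin m) ℝ)
    (B₁ : ∀ j : Fin k, Matrix (Fin n) (Fin (p j)) ℝ)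
    (C₁ : ∀ j : Fin k, Matrix (Fin (q j)) (Fin n) ℝ)
    (D₁ : ∀ j : Fin k, Matrix (Fin (q j)) (Fin m) ℝ)
    (B₂' : ∀ i : Fin g, Matrix (Fin n) (Fin (r i)) ℝ)
    (C₂ : ∀ i : Fin g, Matrix (Fin (s i)) (Fin n) ℝ)
    (D₂ : ∀ i : Fin g, Matrix (Fin (s i)) (Fin m) ℝ)
    (R : Matrix (Fin n) (Fin n) ℝ) (hR : R.PosDef)
    (G : Matrix (Fin m) (Fin m) ℝ) (hG : G.PosDef)
    (τ : Fin k → ℝ) (hτ : ∀ j, 0 < τ j)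
    (Gτ : Matrix (Fin m) (Fin m) ℝ)
    (hGτ : Gτ = G + (∑ j, τ j • ((D₁ j)ᵀ * D₁ j)) + ∑ i, (D₂ i)ᵀ * D₂ i)
    (Qτ : Matrix (Fin n) (Fin n) ℝ)
    (hQτ : Qτ = R + (∑ j, τ j • ((C₁ j)ᵀ * C₁ j)) + ∑ i, (C₂ i)ᵀ * C₂ i)
    (Lτ : Matrix (Fin n) (Fin m) ℝ)
    (hLτ : Lτ = (∑ j, τ j • ((C₁ j)ᵀ * D₁ j)) + ∑ i, (C₂ i)ᵀ * D₂ i)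
    (Wτ : Matrix (Fin n) (Fin n) ℝ)
    (hWτ : Wτ = (∑ j, (τ j)⁻¹ • (B₁ j * (B₁ j)ᵀ)) + ∑ i, B₂' i * (B₂' i)ᵀ)
    (X : Matrix (Fin n) (Fin n) ℝ) (hXsymm : X.IsSymm)
    (hRic : (A - B₂ * Gτ⁻¹ * Lτᵀ)ᵀ * X + X * (A - B₂ * Gτ⁻¹ * Lτᵀ) +
      X * (Wτ - B₂ * Gτ⁻¹ * B₂ᵀ) * X + Qτ - Lτ * Gτ⁻¹ * Lτᵀ = 0)
    (K : Matrix (Fin m) (Fin n) ℝ) (hK : K = -(Gτ⁻¹ * (B₂ᵀ * X + Lτᵀ))) :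
    ∀ (x : Fin n → ℝ) (ξ : ∀ j : Fin k, Fin (p j) → ℝ) (η : ∀ i : Fin g, Fin (r i) → ℝ),
      2 * (x ⬝ᵥ (X *ᵥ (A *ᵥ x + (∑ j, B₁ j *ᵥ ξ j) + (∑ i, B₂' i *ᵥ η i) +
            B₂ *ᵥ (K *ᵥ x)))) +
        x ⬝ᵥ (R *ᵥ x) + (K *ᵥ x) ⬝ᵥ (G *ᵥ (K *ᵥ x)) +
        (∑ j, τ j * ((∑ a, ((C₁ j *ᵥ x + D₁ j *ᵥ (K *ᵥ x)) a) ^ 2) - ∑ a, ξ j a ^ 2)) +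
        (∑ i, ((∑ a, ((C₂ i *ᵥ x + D₂ i *ᵥ (K *ᵥ x)) a) ^ 2) - ∑ a, η i a ^ 2)) ≤ 0 :=
  stmt8_general n m k g p q r s A B₂ B₁ C₁ D₁ B₂' C₂ D₂ R G hG τ hτ Gτ hGτ Qτ hQτ Lτ hLτ Wτ hWτ X
    hXsymm hRic K hK
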